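/- Let T = T_{[w₁,w₂]} be the rooted planar binary tree obtained by grafting trees T₁ (for w₁, on leaf label set L₁) and T₂ (for w₂, on leaf label set L₂, with L₁ and L₂ disjoint) at a new root, with T₁ on the left. Let G be an oriented graph on L₁ ∪ L₂ with |L₁|+|L₂|−1 edges such that β_{G,T} is bijective. Then G has exactly one edge e connecting L₁ to L₂, the restrictions G₁, G₂ of G to L₁, L₂ satisfy bijectivity of β_{Gᵢ,Tᵢ}, and ⟨G,T⟩ = ε·⟨G₁,T₁⟩·⟨G₂,T₂⟩ where ε = +1 if e is oriented from L₁ to L₂ and ε = −1 otherwise. -/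

import Mathlib

/-- Rooted half-planar binary trees with leaves labeled in `α`. -/
inductive PTree (α : Type) : Type
  | leaf : α → PTree α
  | node : PTree α → PTree α → PTree α
deriving DecidableEq

namespace PTree

variable {α : Type} [DecidableEq α]

/-- The list of leaf labels, read left to right. -/
def leaves : PTree α → List α
  | leaf a => [a]
  | node l r => leaves l ++ leaves r

/-- The internal vertices of a tree, identified with the subtrees they root. -/
def subtrees : PTree α → List (PTree α)
  | leaf _ => []
  | node l r => node l r :: (subtrees l ++ subtrees r)

/-- `gcv T i j` is the lowest common ancestor (greatest common vertex) of
leaves `i` and `j`, as the subtree it roots; `none` if undefined. -/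
def gcv : PTree α → α → α → Option (PTree α)
  | leaf _, _, _ => none
  | node l r, i, j =>
    if i ∈ l.leaves ∧ j ∈ l.leaves then gcv l i j
    else if i ∈ r.leaves ∧ j ∈ r.leaves then gcv r i j
    else if i ∈ (node l r).leaves ∧ j ∈ (node l r).leaves ∧ i ≠ j then
      some (node l r)
    else none

/-- `isLeftOf T i j` : leaf `i` lies strictly to the left of leaf `j`. -/
def isLeftOf : PTree α → α → α → Bool
  | leaf _, _, _ => false
  | node l r, i, j =>
    decide (i ∈ l.leaves ∧ j ∈ r.leaves) || isLeftOf l i j || isLeftOf r i j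

/-- The sign of an oriented edge `(i → j)` relative to `T`. -/
def esgn (T : PTree α) (e : α × α) : ℤ := if T.isLeftOf e.1 e.2 then 1 else -1

/-- The configuration pairing `⟨G, T⟩` of an oriented graph `G` (a list of
oriented edges) with a tree `T`: the product of edge signs if
`β_{G,T} = gcv` is surjective onto internal vertices, else `0`. -/
def pairing (T : PTree α) (G : List (α × α)) : ℤ :=
  if ∀ t ∈ T.subtrees, ∃ e ∈ G, T.gcv e.1 e.2 = some t then
    (G.map T.esgn).prod
  else 0

end PTree

/-- The simple graph underlying a list of oriented edges. -/
def toSG {α : Type} (G : List (α × α)) : SimpleGraph α where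
  Adj v w := v ≠ w ∧ ((v, w) ∈ G ∨ (w, v) ∈ G)
  symm := ⟨fun v w h => ⟨h.1.symm, h.2.elim Or.inr Or.inl⟩⟩
  loopless := ⟨fun v h => h.1 rfl⟩

/-! The root of `node T₁ T₂` is the `gcv` of exactly the edges crossing between the two leaf
sets, while every other edge has its `gcv` and its sign computed inside `T₁` or `T₂`.
Surjectivity of β onto the root and injectivity of β therefore single out exactly one crossing
edge, β restricts to bijections on the two sides, and the product of edge signs splits into the
two sub-products times the sign of the crossing edge. -/

theorem List.prod_map_eq_filter_mul_filter_mul {β M : Type*} [CommMonoid M] {l : List β}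
    (hl : l.Nodup) (f : β → M) (p q : β → Prop) [DecidablePred p] [DecidablePred q] {a : β}
    (ha : a ∈ l) (hpa : ¬p a) (hqa : ¬q a) (hpq : ∀ x ∈ l, p x → ¬q x)
    (hcover : ∀ x ∈ l, p x ∨ q x ∨ x = a) :
    (l.map f).prod = ((l.filter p).map f).prod * ((l.filter q).map f).prod * f a := by
  classical
  have hq : (l.filter fun x => ¬p x).filter q = l.filter q := by
    rw [filter_filter]
    refine filter_congr fun x hx => ?_
    by_cases hqx : q x
    · simpa [hqx] using fun hpx => hpq x hx hpx hqx
    · simp [hqx]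
  have hrest : (l.filter fun x => ¬p x).filter (fun x => ¬q x) = [a] := by
    rw [filter_filter, ← replicate_one, ← count_eq_one_of_mem hl ha, ← filter_eq]
    refine filter_congr fun x hx => ?_
    rcases hcover x hx with hpx | hqx | rfl
    · simpa [hpx] using fun h : x = a => hpa (h ▸ hpx)
    · simpa [hqx] using fun h : x = a => hqa (h ▸ hqx)
    · simp [hpa, hqa]
  rw [← prod_map_filter_mul_prod_map_filter_not p f l,
    ← prod_map_filter_mul_prod_map_filter_not q f (l.filter fun x => ¬p x), hq, hrest,
    map_singleton, prod_singleton, mul_assoc]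

section Edges

variable {α : Type}

def Crosses (L₁ L₂ : List α) (e : α × α) : Prop :=
  (e.1 ∈ L₁ ∧ e.2 ∈ L₂) ∨ (e.1 ∈ L₂ ∧ e.2 ∈ L₁)

variable [DecidableEq α]

def induceEdges (G : List (α × α)) (L : List α) : List (α × α) :=
  G.filter fun e => e.1 ∈ L ∧ e.2 ∈ L

theorem mem_induceEdges {G : List (α × α)} {L : List α} {e : α × α} :
    e ∈ induceEdges G L ↔ e ∈ G ∧ e.1 ∈ L ∧ e.2 ∈ L := by
  simp [induceEdges]

end Edges

namespace PTree

variable {α : Type}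

theorem leaves_ne_nil (T : PTree α) : T.leaves ≠ [] := by
  induction T with
  | leaf a => simp [leaves]
  | node l r ihl _ => simp [leaves, ihl]

theorem leaves_infix_of_mem_subtrees {T t : PTree α} (h : t ∈ T.subtrees) :
    t.leaves <:+: T.leaves := by
  induction T with
  | leaf a => simp [subtrees] at h
  | node l r ihl ihr =>
    simp only [subtrees, List.mem_cons, List.mem_append] at h
    rcases h with rfl | h | h
    · exact List.infix_refl _
    · exact List.infix_append_of_infix_left (ihl h)
    · exact List.infix_append_of_infix_right (ihr h)

theorem node_notMem_subtrees_left (l r : PTree α) : node l r ∉ l.subtrees := fun h => by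
  have hle := (leaves_infix_of_mem_subtrees h).length_le
  have hpos := List.length_pos_iff.2 (leaves_ne_nil r)
  simp only [leaves, List.length_append] at hle
  omega

theorem node_notMem_subtrees_right (l r : PTree α) : node l r ∉ r.subtrees := fun h => by
  have hle := (leaves_infix_of_mem_subtrees h).length_le
  have hpos := List.length_pos_iff.2 (leaves_ne_nil l)
  simp only [leaves, List.length_append] at hle
  omega

theorem disjoint_subtrees {l r : PTree α} (hd : l.leaves.Disjoint r.leaves) :
    l.subtrees.Disjoint r.subtrees := fun t hl hr => by
  obtain ⟨a, ha⟩ := List.exists_mem_of_ne_nil _ (leaves_ne_nil t)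
  exact hd ((leaves_infix_of_mem_subtrees hl).subset ha) ((leaves_infix_of_mem_subtrees hr).subset ha)

variable [DecidableEq α]

def BetaSurjective (T : PTree α) (G : List (α × α)) : Prop :=
  ∀ t ∈ T.subtrees, ∃ e ∈ G, T.gcv e.1 e.2 = some t

def BetaInjective (T : PTree α) (G : List (α × α)) : Prop :=
  ∀ e ∈ G, ∀ f ∈ G, T.gcv e.1 e.2 = T.gcv f.1 f.2 → e = f

theorem pairing_of_betaSurjective {T : PTree α} {G : List (α × α)} (h : T.BetaSurjective G) :
    T.pairing G = (G.map T.esgn).prod :=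
  if_pos h

theorem mem_subtrees_of_gcv_eq_some {T t : PTree α} {i j : α} (h : T.gcv i j = some t) :
    t ∈ T.subtrees := by
  induction T with
  | leaf a => simp [gcv] at h
  | node l r ihl ihr =>
    simp only [gcv] at h
    split_ifs at h
    · simp [subtrees, ihl h]
    · simp [subtrees, ihr h]
    · simp [subtrees, Option.some.inj h]

theorem mem_leaves_of_isLeftOf {T : PTree α} {i j : α} (h : T.isLeftOf i j = true) :
    i ∈ T.leaves ∧ j ∈ T.leaves := by
  induction T with
  | leaf a => simp [isLeftOf] at h
  | node l r ihl ihr =>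
    simp only [isLeftOf, Bool.or_eq_true, decide_eq_true_eq] at h
    simp only [leaves, List.mem_append]
    rcases h with (h | h) | h
    · exact ⟨Or.inl h.1, Or.inr h.2⟩
    · exact ⟨Or.inl (ihl h).1, Or.inl (ihl h).2⟩
    · exact ⟨Or.inr (ihr h).1, Or.inr (ihr h).2⟩

section Graft

variable {l r : PTree α} {i j : α}

theorem gcv_node_of_mem_left (hi : i ∈ l.leaves) (hj : j ∈ l.leaves) :
    (node l r).gcv i j = l.gcv i j := by
  rw [gcv, if_pos ⟨hi, hj⟩]

theorem gcv_node_of_mem_right (hd : l.leaves.Disjoint r.leaves) (hi : i ∈ r.leaves)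
    (hj : j ∈ r.leaves) : (node l r).gcv i j = r.gcv i j := by
  rw [gcv, if_neg fun h => hd h.1 hi, if_pos ⟨hi, hj⟩]

theorem gcv_node_of_crosses (hd : l.leaves.Disjoint r.leaves)
    (h : Crosses l.leaves r.leaves (i, j)) : (node l r).gcv i j = some (node l r) := by
  rcases h with ⟨hi, hj⟩ | ⟨hi, hj⟩
  · have hj' : j ∉ l.leaves := fun h => hd h hj
    have hi' : i ∉ r.leaves := fun h => hd hi h
    simp [gcv, leaves, hi, hj, hi', hj', ne_of_mem_of_not_mem hi hj']
  · have hi' : i ∉ l.leaves := fun h => hd h hi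
    have hj' : j ∉ r.leaves := fun h => hd hj h
    simp [gcv, leaves, hi, hj, hi', hj', ne_of_mem_of_not_mem hi hj']

theorem gcv_node_eq_some_cases {t : PTree α} (h : (node l r).gcv i j = some t) :
    (i ∈ l.leaves ∧ j ∈ l.leaves ∧ l.gcv i j = some t) ∨
      (i ∈ r.leaves ∧ j ∈ r.leaves ∧ r.gcv i j = some t) ∨
      (t = node l r ∧ Crosses l.leaves r.leaves (i, j)) := by
  rw [gcv] at h
  split_ifs at h with hl hr hlr
  · exact Or.inl ⟨hl.1, hl.2, h⟩
  · exact Or.inr (Or.inl ⟨hr.1, hr.2, h⟩)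
  · refine Or.inr (Or.inr ⟨(Option.some.inj h).symm, ?_⟩)
    simp only [leaves, List.mem_append] at hlr
    unfold Crosses
    tauto

theorem gcv_node_eq_some_node_iff (hd : l.leaves.Disjoint r.leaves) :
    (node l r).gcv i j = some (node l r) ↔ Crosses l.leaves r.leaves (i, j) := by
  refine ⟨fun h => ?_, gcv_node_of_crosses hd⟩
  rcases gcv_node_eq_some_cases h with ⟨-, -, h⟩ | ⟨-, -, h⟩ | ⟨-, h⟩
  · exact absurd (mem_subtrees_of_gcv_eq_some h) (node_notMem_subtrees_left l r)
  · exact absurd (mem_subtrees_of_gcv_eq_some h) (node_notMem_subtrees_right l r)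
  · exact h

theorem mem_leaves_left_of_gcv_node_eq_some (hd : l.leaves.Disjoint r.leaves) {t : PTree α}
    (h : (node l r).gcv i j = some t) (ht : t ∈ l.subtrees) : i ∈ l.leaves ∧ j ∈ l.leaves := by
  rcases gcv_node_eq_some_cases h with ⟨hi, hj, -⟩ | ⟨-, -, h⟩ | ⟨rfl, -⟩
  · exact ⟨hi, hj⟩
  · exact absurd (mem_subtrees_of_gcv_eq_some h) (disjoint_subtrees hd ht)
  · exact absurd ht (node_notMem_subtrees_left l r)

theorem mem_leaves_right_of_gcv_node_eq_some (hd : l.leaves.Disjoint r.leaves) {t : PTree α}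
    (h : (node l r).gcv i j = some t) (ht : t ∈ r.subtrees) : i ∈ r.leaves ∧ j ∈ r.leaves := by
  rcases gcv_node_eq_some_cases h with ⟨-, -, h⟩ | ⟨hi, hj, -⟩ | ⟨rfl, -⟩
  · exact absurd ht (disjoint_subtrees hd (mem_subtrees_of_gcv_eq_some h))
  · exact ⟨hi, hj⟩
  · exact absurd ht (node_notMem_subtrees_right l r)

theorem betaSurjective_induceEdges_left (hd : l.leaves.Disjoint r.leaves)
    {G : List (α × α)} (h : (node l r).BetaSurjective G) :
    l.BetaSurjective (induceEdges G l.leaves) := fun t ht => by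
  obtain ⟨e, he, hgcv⟩ := h t (by simp [subtrees, ht])
  obtain ⟨h₁, h₂⟩ := mem_leaves_left_of_gcv_node_eq_some hd hgcv ht
  exact ⟨e, mem_induceEdges.2 ⟨he, h₁, h₂⟩, gcv_node_of_mem_left h₁ h₂ ▸ hgcv⟩

theorem betaSurjective_induceEdges_right (hd : l.leaves.Disjoint r.leaves)
    {G : List (α × α)} (h : (node l r).BetaSurjective G) :
    r.BetaSurjective (induceEdges G r.leaves) := fun t ht => by
  obtain ⟨e, he, hgcv⟩ := h t (by simp [subtrees, ht])
  obtain ⟨h₁, h₂⟩ := mem_leaves_right_of_gcv_node_eq_some hd hgcv ht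
  exact ⟨e, mem_induceEdges.2 ⟨he, h₁, h₂⟩, gcv_node_of_mem_right hd h₁ h₂ ▸ hgcv⟩

theorem betaInjective_induceEdges_left {G : List (α × α)} (h : (node l r).BetaInjective G) :
    l.BetaInjective (induceEdges G l.leaves) := fun e he f hf hgcv => by
  obtain ⟨he, he₁, he₂⟩ := mem_induceEdges.1 he
  obtain ⟨hf, hf₁, hf₂⟩ := mem_induceEdges.1 hf
  exact h e he f hf (by rw [gcv_node_of_mem_left he₁ he₂, gcv_node_of_mem_left hf₁ hf₂, hgcv])

theorem betaInjective_induceEdges_right (hd : l.leaves.Disjoint r.leaves)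
    {G : List (α × α)} (h : (node l r).BetaInjective G) :
    r.BetaInjective (induceEdges G r.leaves) := fun e he f hf hgcv => by
  obtain ⟨he, he₁, he₂⟩ := mem_induceEdges.1 he
  obtain ⟨hf, hf₁, hf₂⟩ := mem_induceEdges.1 hf
  exact h e he f hf (by
    rw [gcv_node_of_mem_right hd he₁ he₂, gcv_node_of_mem_right hd hf₁ hf₂, hgcv])

theorem existsUnique_crosses (hd : l.leaves.Disjoint r.leaves) {G : List (α × α)}
    (hinj : (node l r).BetaInjective G) (hsurj : (node l r).BetaSurjective G) :
    ∃! e, e ∈ G ∧ Crosses l.leaves r.leaves e := by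
  obtain ⟨e, he, hgcv⟩ := hsurj (node l r) List.mem_cons_self
  refine ⟨e, ⟨he, (gcv_node_eq_some_node_iff hd).1 hgcv⟩, fun f ⟨hf, hcross⟩ => ?_⟩
  exact hinj f hf e he (by rw [hgcv, (gcv_node_eq_some_node_iff hd).2 hcross])

theorem esgn_node_of_mem_left (hd : l.leaves.Disjoint r.leaves) {e : α × α}
    (h₁ : e.1 ∈ l.leaves) (h₂ : e.2 ∈ l.leaves) : (node l r).esgn e = l.esgn e := by
  have h₂' : e.2 ∉ r.leaves := fun h => hd h₂ h
  have hr : r.isLeftOf e.1 e.2 = false :=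
    Bool.eq_false_iff.2 fun h => hd h₁ (mem_leaves_of_isLeftOf h).1
  simp [esgn, isLeftOf, hr, h₂']

theorem esgn_node_of_mem_right (hd : l.leaves.Disjoint r.leaves) {e : α × α}
    (h₁ : e.1 ∈ r.leaves) : (node l r).esgn e = r.esgn e := by
  have h₁' : e.1 ∉ l.leaves := fun h => hd h h₁
  have hl : l.isLeftOf e.1 e.2 = false :=
    Bool.eq_false_iff.2 fun h => h₁' (mem_leaves_of_isLeftOf h).1
  simp [esgn, isLeftOf, hl, h₁']

theorem esgn_node_of_crosses (hd : l.leaves.Disjoint r.leaves) {e : α × α}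
    (h : Crosses l.leaves r.leaves e) :
    (node l r).esgn e = if e.1 ∈ l.leaves then 1 else -1 := by
  rcases h with ⟨h₁, h₂⟩ | ⟨h₁, h₂⟩
  · simp [esgn, isLeftOf, h₁, h₂]
  · have h₁' : e.1 ∉ l.leaves := fun h => hd h h₁
    have hl : l.isLeftOf e.1 e.2 = false :=
      Bool.eq_false_iff.2 fun h => h₁' (mem_leaves_of_isLeftOf h).1
    have hr : r.isLeftOf e.1 e.2 = false :=
      Bool.eq_false_iff.2 fun h => hd h₂ (mem_leaves_of_isLeftOf h).2
    simp [esgn, isLeftOf, h₁', hl, hr]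

theorem pairing_node (hd : l.leaves.Disjoint r.leaves) {G : List (α × α)} (hG : G.Nodup)
    (hends : ∀ x ∈ G, x.1 ∈ (node l r).leaves ∧ x.2 ∈ (node l r).leaves)
    (hsurj : (node l r).BetaSurjective G) {e : α × α} (he : e ∈ G)
    (hcross : Crosses l.leaves r.leaves e) (huniq : ∀ f ∈ G, Crosses l.leaves r.leaves f → f = e) :
    (node l r).pairing G = (if e.1 ∈ l.leaves then 1 else -1) *
      l.pairing (induceEdges G l.leaves) * r.pairing (induceEdges G r.leaves) := by
  have hnot_left : ¬(e.1 ∈ l.leaves ∧ e.2 ∈ l.leaves) := by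
    rintro ⟨h₁, h₂⟩
    rcases hcross with ⟨-, h⟩ | ⟨h, -⟩
    exacts [hd h₂ h, hd h₁ h]
  have hnot_right : ¬(e.1 ∈ r.leaves ∧ e.2 ∈ r.leaves) := by
    rintro ⟨h₁, h₂⟩
    rcases hcross with ⟨h, -⟩ | ⟨-, h⟩
    exacts [hd h h₁, hd h h₂]
  have hcover : ∀ x ∈ G, (x.1 ∈ l.leaves ∧ x.2 ∈ l.leaves) ∨
      (x.1 ∈ r.leaves ∧ x.2 ∈ r.leaves) ∨ x = e := by
    intro x hx
    obtain ⟨h₁, h₂⟩ := hends x hx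
    simp only [leaves, List.mem_append] at h₁ h₂
    rcases h₁ with h₁ | h₁ <;> rcases h₂ with h₂ | h₂
    exacts [Or.inl ⟨h₁, h₂⟩, Or.inr (Or.inr (huniq x hx (Or.inl ⟨h₁, h₂⟩))),
      Or.inr (Or.inr (huniq x hx (Or.inr ⟨h₁, h₂⟩))), Or.inr (Or.inl ⟨h₁, h₂⟩)]
  have hleft : (induceEdges G l.leaves).map (node l r).esgn =
      (induceEdges G l.leaves).map l.esgn := List.map_congr_left fun x hx =>
    have ⟨_, h₁, h₂⟩ := mem_induceEdges.1 hx; esgn_node_of_mem_left hd h₁ h₂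
  have hright : (induceEdges G r.leaves).map (node l r).esgn =
      (induceEdges G r.leaves).map r.esgn := List.map_congr_left fun x hx =>
    esgn_node_of_mem_right hd (mem_induceEdges.1 hx).2.1
  rw [pairing_of_betaSurjective hsurj,
    pairing_of_betaSurjective (betaSurjective_induceEdges_left hd hsurj),
    pairing_of_betaSurjective (betaSurjective_induceEdges_right hd hsurj)]
  calc (G.map (node l r).esgn).prod
      = ((induceEdges G l.leaves).map (node l r).esgn).prod *
          ((induceEdges G r.leaves).map (node l r).esgn).prod * (node l r).esgn e :=
        List.prod_map_eq_filter_mul_filter_mul hG _ _ _ he hnot_left hnot_right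
          (fun x _ h h' => hd h.1 h'.1) hcover
    _ = _ := by rw [hleft, hright, esgn_node_of_crosses hd hcross]; ring

end Graft

end PTree

theorem pairing_of_graft_general
    {α : Type} [DecidableEq α] (T₁ T₂ : PTree α)
    (hdisj : ∀ a ∈ T₁.leaves, a ∉ T₂.leaves)
    (G : List (α × α)) (hG : G.Nodup)
    (hends : ∀ e ∈ G, e.1 ∈ (PTree.node T₁ T₂).leaves ∧
      e.2 ∈ (PTree.node T₁ T₂).leaves ∧ e.1 ≠ e.2)
    -- β_{G,T} is a bijection
    (hinj : ∀ e ∈ G, ∀ f ∈ G,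
      (PTree.node T₁ T₂).gcv e.1 e.2 = (PTree.node T₁ T₂).gcv f.1 f.2 → e = f)
    (hsurj : ∀ t ∈ (PTree.node T₁ T₂).subtrees, ∃ e ∈ G,
      (PTree.node T₁ T₂).gcv e.1 e.2 = some t) :
    (∃! e, e ∈ G ∧ ((e.1 ∈ T₁.leaves ∧ e.2 ∈ T₂.leaves) ∨
        (e.1 ∈ T₂.leaves ∧ e.2 ∈ T₁.leaves))) ∧
    (∀ t ∈ T₁.subtrees, ∃ e ∈ G.filter
        (fun e => decide (e.1 ∈ T₁.leaves ∧ e.2 ∈ T₁.leaves)),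
      T₁.gcv e.1 e.2 = some t) ∧
    (∀ t ∈ T₂.subtrees, ∃ e ∈ G.filter
        (fun e => decide (e.1 ∈ T₂.leaves ∧ e.2 ∈ T₂.leaves)),
      T₂.gcv e.1 e.2 = some t) ∧
    (∀ e ∈ G.filter (fun e => decide (e.1 ∈ T₁.leaves ∧ e.2 ∈ T₁.leaves)),
      ∀ f ∈ G.filter (fun e => decide (e.1 ∈ T₁.leaves ∧ e.2 ∈ T₁.leaves)),
      T₁.gcv e.1 e.2 = T₁.gcv f.1 f.2 → e = f) ∧
    (∀ e ∈ G.filter (fun e => decide (e.1 ∈ T₂.leaves ∧ e.2 ∈ T₂.leaves)),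
      ∀ f ∈ G.filter (fun e => decide (e.1 ∈ T₂.leaves ∧ e.2 ∈ T₂.leaves)),
      T₂.gcv e.1 e.2 = T₂.gcv f.1 f.2 → e = f) ∧
    (∀ e ∈ G, ((e.1 ∈ T₁.leaves ∧ e.2 ∈ T₂.leaves) ∨
        (e.1 ∈ T₂.leaves ∧ e.2 ∈ T₁.leaves)) →
      (PTree.node T₁ T₂).pairing G =
        (if e.1 ∈ T₁.leaves then 1 else -1) *
        T₁.pairing (G.filter (fun e => decide (e.1 ∈ T₁.leaves ∧ e.2 ∈ T₁.leaves))) *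
        T₂.pairing (G.filter (fun e => decide (e.1 ∈ T₂.leaves ∧ e.2 ∈ T₂.leaves)))) := by
  have hd : T₁.leaves.Disjoint T₂.leaves := fun a h₁ h₂ => hdisj a h₁ h₂
  have hunique := PTree.existsUnique_crosses hd hinj hsurj
  refine ⟨hunique, PTree.betaSurjective_induceEdges_left hd hsurj,
    PTree.betaSurjective_induceEdges_right hd hsurj, PTree.betaInjective_induceEdges_left hinj,
    PTree.betaInjective_induceEdges_right hd hinj, fun e he hcross => ?_⟩
  exact PTree.pairing_node hd hG (fun x hx => ⟨(hends x hx).1, (hends x hx).2.1⟩) hsurj he hcross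
    fun f hf hf_cross => hunique.unique ⟨hf, hf_cross⟩ ⟨he, hcross⟩

/-- For `T = node T₁ T₂` (grafting, `T₁` on the left) with disjoint
leaf sets `L₁, L₂`, and `G` on `L₁ ∪ L₂` with `|L₁| + |L₂| - 1` edges such that
`β_{G,T}` is bijective: `G` has exactly one edge between `L₁` and `L₂`, the
restrictions `G₁, G₂` have bijective `β_{Gᵢ,Tᵢ}`, and
`⟨G,T⟩ = ε ⟨G₁,T₁⟩ ⟨G₂,T₂⟩` with `ε = +1` iff the edge points from `L₁` to `L₂`. -/
theorem pairing_of_graft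
    {α : Type} [DecidableEq α] (T₁ T₂ : PTree α)
    (h₁ : T₁.leaves.Nodup) (h₂ : T₂.leaves.Nodup)
    (hdisj : ∀ a ∈ T₁.leaves, a ∉ T₂.leaves)
    (G : List (α × α)) (hG : G.Nodup)
    (hcard : G.length = T₁.leaves.length + T₂.leaves.length - 1)
    (hends : ∀ e ∈ G, e.1 ∈ (PTree.node T₁ T₂).leaves ∧
      e.2 ∈ (PTree.node T₁ T₂).leaves ∧ e.1 ≠ e.2)
    -- β_{G,T} is a bijection
    (hinj : ∀ e ∈ G, ∀ f ∈ G,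
      (PTree.node T₁ T₂).gcv e.1 e.2 = (PTree.node T₁ T₂).gcv f.1 f.2 → e = f)
    (hsurj : ∀ t ∈ (PTree.node T₁ T₂).subtrees, ∃ e ∈ G,
      (PTree.node T₁ T₂).gcv e.1 e.2 = some t) :
    (∃! e, e ∈ G ∧ ((e.1 ∈ T₁.leaves ∧ e.2 ∈ T₂.leaves) ∨
        (e.1 ∈ T₂.leaves ∧ e.2 ∈ T₁.leaves))) ∧
    (∀ t ∈ T₁.subtrees, ∃ e ∈ G.filter
        (fun e => decide (e.1 ∈ T₁.leaves ∧ e.2 ∈ T₁.leaves)),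
      T₁.gcv e.1 e.2 = some t) ∧
    (∀ t ∈ T₂.subtrees, ∃ e ∈ G.filter
        (fun e => decide (e.1 ∈ T₂.leaves ∧ e.2 ∈ T₂.leaves)),
      T₂.gcv e.1 e.2 = some t) ∧
    (∀ e ∈ G.filter (fun e => decide (e.1 ∈ T₁.leaves ∧ e.2 ∈ T₁.leaves)),
      ∀ f ∈ G.filter (fun e => decide (e.1 ∈ T₁.leaves ∧ e.2 ∈ T₁.leaves)),
      T₁.gcv e.1 e.2 = T₁.gcv f.1 f.2 → e = f) ∧
    (∀ e ∈ G.filter (fun e => decide (e.1 ∈ T₂.leaves ∧ e.2 ∈ T₂.leaves)),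
      ∀ f ∈ G.filter (fun e => decide (e.1 ∈ T₂.leaves ∧ e.2 ∈ T₂.leaves)),
      T₂.gcv e.1 e.2 = T₂.gcv f.1 f.2 → e = f) ∧
    (∀ e ∈ G, ((e.1 ∈ T₁.leaves ∧ e.2 ∈ T₂.leaves) ∨
        (e.1 ∈ T₂.leaves ∧ e.2 ∈ T₁.leaves)) →
      (PTree.node T₁ T₂).pairing G =
        (if e.1 ∈ T₁.leaves then 1 else -1) *
        T₁.pairing (G.filter (fun e => decide (e.1 ∈ T₁.leaves ∧ e.2 ∈ T₁.leaves))) *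
        T₂.pairing (G.filter (fun e => decide (e.1 ∈ T₂.leaves ∧ e.2 ∈ T₂.leaves)))) :=
  pairing_of_graft_general T₁ T₂ hdisj G hG hends hinj hsurj
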